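/- Intertwining yields the inverse: let C* : ℝ → L(H, ℂ²) be differentiable in operator norm and satisfy (C*)'(x) = σ₁⁻¹∘(σ₂∘C*(x)∘A + γ*(x)∘C*(x)) for all x, assume C*(x)∘B(x) = C(x)∘X(x)⁻¹∘B(x) for all x (as maps ℂ² → ℂ²), and assume C*(0)∘X(0) = C(0). Then, in the bounded vessel setting, C*(x)∘X(x) = C(x) for all x ∈ ℝ. -/

import Mathlib

/-! The defect `D = C* X - C` vanishes at `0` and, after eliminating `A X` with the Lyapunov
equation and `C* B` with the intertwining hypothesis, solves the linear equation
`D' = σ₁⁻¹ (-σ₂ D A_ζ + γ* D)`. Its coefficient is continuous, so Grönwall-type uniqueness for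
linear ODEs forces `D = 0`. -/

open ContinuousLinearMap

/-- The linkage matrix `γ*(x) = γ + σ₂ C X⁻¹ B σ₁ - σ₁ C X⁻¹ B σ₂`. -/
noncomputable def gammaStar {H : Type*} [NormedAddCommGroup H] [NormedSpace ℂ H]
    (σ₁ σ₂ γ : (Fin 2 → ℂ) →L[ℂ] (Fin 2 → ℂ))
    (B : ℝ → ((Fin 2 → ℂ) →L[ℂ] H)) (C : ℝ → (H →L[ℂ] (Fin 2 → ℂ)))
    (Xinv : ℝ → (H →L[ℂ] H)) (x : ℝ) : (Fin 2 → ℂ) →L[ℂ] (Fin 2 → ℂ) :=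
  γ + σ₂ ∘L (((C x ∘L Xinv x) ∘L B x) ∘L σ₁) - σ₁ ∘L (((C x ∘L Xinv x) ∘L B x) ∘L σ₂)

theorem HasDerivAt.clm_comp_of_isScalarTower {𝕜 𝕜' : Type*} [NontriviallyNormedField 𝕜]
    [NontriviallyNormedField 𝕜'] [NormedAlgebra 𝕜 𝕜'] {E F G : Type*}
    [NormedAddCommGroup E] [NormedSpace 𝕜 E] [NormedSpace 𝕜' E] [IsScalarTower 𝕜 𝕜' E]
    [NormedAddCommGroup F] [NormedSpace 𝕜 F] [NormedSpace 𝕜' F] [IsScalarTower 𝕜 𝕜' F]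
    [NormedAddCommGroup G] [NormedSpace 𝕜 G] [NormedSpace 𝕜' G] [IsScalarTower 𝕜 𝕜' G]
    {c : 𝕜 → F →L[𝕜'] G} {c' : F →L[𝕜'] G} {d : 𝕜 → E →L[𝕜'] F} {d' : E →L[𝕜'] F} {x : 𝕜}
    (hc : HasDerivAt c c' x) (hd : HasDerivAt d d' x) :
    HasDerivAt (fun y => c y ∘L d y) (c' ∘L d x + c x ∘L d') x := by
  rw [add_comm]
  exact ((compL 𝕜' E F G).bilinearRestrictScalars 𝕜).hasDerivAt_of_bilinear
    (fun _ => hc) (fun _ => hd)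

open Set in
theorem eq_zero_of_hasDerivAt_clm_apply {𝕜 E : Type*} [NontriviallyNormedField 𝕜]
    [NormedAddCommGroup E] [NormedSpace ℝ E] [NormedSpace 𝕜 E]
    {L : ℝ → E →L[𝕜] E} (hL : Continuous L) {f : ℝ → E}
    (hf : ∀ t, HasDerivAt f (L t (f t)) t) {t₀ : ℝ} (hf₀ : f t₀ = 0) (t : ℝ) : f t = 0 := by
  obtain ⟨a, b, ht, ht₀⟩ : ∃ a b, t ∈ Ioo a b ∧ t₀ ∈ Ioo a b :=
    ⟨min t t₀ - 1, max t t₀ + 1, by grind, by grind⟩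
  obtain ⟨M, hM⟩ := (isCompact_Icc (a := a) (b := b)).exists_bound_of_continuousOn hL.continuousOn
  have hLip : ∀ s ∈ Ioo a b, LipschitzOnWith M.toNNReal (L s) univ := fun s hs => by
    have hLs := hM s (Ioo_subset_Icc_self hs)
    exact ((L s).lipschitz.weaken
      ((Real.le_toNNReal_iff_coe_le ((norm_nonneg _).trans hLs)).2 hLs)).lipschitzOnWith
  have hf_cont : Continuous f := continuous_iff_continuousAt.2 fun s => (hf s).continuousAt
  exact ODE_solution_unique_of_mem_Icc (g := 0) hLip ht₀ hf_cont.continuousOn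
    (fun s _ => hf s) (fun _ _ => trivial) continuousOn_const
    (fun s _ => by simp) (fun _ _ => trivial) hf₀
    (Ioo_subset_Icc_self ht)

section Vessel

variable {H : Type*} [NormedAddCommGroup H] [NormedSpace ℂ H]

theorem continuous_gammaStar (σ₁ σ₂ γ : (Fin 2 → ℂ) →L[ℂ] (Fin 2 → ℂ))
    {B : ℝ → ((Fin 2 → ℂ) →L[ℂ] H)} {C : ℝ → (H →L[ℂ] (Fin 2 → ℂ))} {Xinv : ℝ → (H →L[ℂ] H)}
    (h : Continuous fun x => (C x ∘L Xinv x) ∘L B x) :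
    Continuous (gammaStar σ₁ σ₂ γ B C Xinv) :=
  (continuous_const.add (continuous_const.clm_comp (h.clm_comp continuous_const))).sub
    (continuous_const.clm_comp (h.clm_comp continuous_const))

theorem hasDerivAt_comp_sub_of_intertwining {σ₁ σ₁inv σ₂ γ : (Fin 2 → ℂ) →L[ℂ] (Fin 2 → ℂ)}
    (hσ₁inv : σ₁inv ∘L σ₁ = 1) {A Aζ : H →L[ℂ] H} {B : ℝ → ((Fin 2 → ℂ) →L[ℂ] H)}
    {C Cst : ℝ → (H →L[ℂ] (Fin 2 → ℂ))} {X Xinv : ℝ → (H →L[ℂ] H)} {x : ℝ}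
    (hC : HasDerivAt C (σ₁inv ∘L (-(σ₂ ∘L (C x ∘L Aζ)) + γ ∘L C x)) x)
    (hX : HasDerivAt X ((B x ∘L σ₂) ∘L C x) x)
    (hLyap : A ∘L X x + X x ∘L Aζ + (B x ∘L σ₁) ∘L C x = 0)
    (hCst : HasDerivAt Cst
      (σ₁inv ∘L (σ₂ ∘L (Cst x ∘L A) + gammaStar σ₁ σ₂ γ B C Xinv x ∘L Cst x)) x)
    (hCstB : Cst x ∘L B x = (C x ∘L Xinv x) ∘L B x) :
    HasDerivAt (fun y => Cst y ∘L X y - C y)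
      (σ₁inv ∘L (-(σ₂ ∘L ((Cst x ∘L X x - C x) ∘L Aζ)) +
        gammaStar σ₁ σ₂ γ B C Xinv x ∘L (Cst x ∘L X x - C x))) x := by
  refine ((hCst.clm_comp_of_isScalarTower hX).sub hC).congr_deriv ?_
  have hAX : ∀ v, A (X x v) = -(X x (Aζ v) + B x (σ₁ (C x v))) := fun v =>
    eq_neg_of_add_eq_zero_left (by simpa [add_assoc] using congr($hLyap v))
  have hCstB' : ∀ w, Cst x (B x w) = C x (Xinv x (B x w)) := fun w => congr($hCstB w)
  have hσ₁inv' : ∀ w, σ₁inv (σ₁ w) = w := fun w => congr($hσ₁inv w)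
  ext v : 1
  simp only [gammaStar, coe_comp, Function.comp_apply, add_apply, sub_apply, neg_apply, map_add,
    map_sub, map_neg, hAX, hCstB', hσ₁inv']
  abel

end Vessel

theorem intertwining_yields_inverse_general
    {H : Type*} [NormedAddCommGroup H] [InnerProductSpace ℂ H]
    (σ₁ σ₁inv σ₂ γ : (Fin 2 → ℂ) →L[ℂ] (Fin 2 → ℂ))
    (hσ₁inv : σ₁inv ∘L σ₁ = 1)
    (A Aζ : H →L[ℂ] H)
    (B : ℝ → ((Fin 2 → ℂ) →L[ℂ] H))
    (C : ℝ → (H →L[ℂ] (Fin 2 → ℂ)))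
    (X Xinv : ℝ → (H →L[ℂ] H))
    (hB : ∀ x : ℝ, HasDerivAt B ((-((A ∘L B x) ∘L σ₂ + B x ∘L γ)) ∘L σ₁inv) x)
    (hC : ∀ x : ℝ, HasDerivAt C (σ₁inv ∘L (-(σ₂ ∘L (C x ∘L Aζ)) + γ ∘L C x)) x)
    (hX : ∀ x : ℝ, HasDerivAt X ((B x ∘L σ₂) ∘L C x) x)
    (hLyap : ∀ x : ℝ, A ∘L X x + X x ∘L Aζ + (B x ∘L σ₁) ∘L C x = 0)
    (Cst : ℝ → (H →L[ℂ] (Fin 2 → ℂ)))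
    (hCst : ∀ x : ℝ, HasDerivAt Cst
      (σ₁inv ∘L (σ₂ ∘L (Cst x ∘L A) + gammaStar σ₁ σ₂ γ B C Xinv x ∘L Cst x)) x)
    (hCstB : ∀ x : ℝ, Cst x ∘L B x = (C x ∘L Xinv x) ∘L B x)
    (hCst0 : Cst 0 ∘L X 0 = C 0) :
    ∀ x : ℝ, Cst x ∘L X x = C x := by
  have hBcont : Continuous B := continuous_iff_continuousAt.2 fun x => (hB x).continuousAt
  have hCstcont : Continuous Cst := continuous_iff_continuousAt.2 fun x => (hCst x).continuousAt
  -- `γ*` involves `X⁻¹` only through `C X⁻¹ B = C* B`, which is continuous.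
  have hγ : Continuous (gammaStar σ₁ σ₂ γ B C Xinv) :=
    continuous_gammaStar σ₁ σ₂ γ (by simpa only [← hCstB] using hCstcont.clm_comp hBcont)
  let F := Fin 2 → ℂ
  -- `L x D = σ₁⁻¹ (-σ₂ D A_ζ + γ*(x) D)`
  let L : ℝ → (H →L[ℂ] F) →L[ℂ] (H →L[ℂ] F) := fun x =>
    compL ℂ H F F σ₁inv ∘L (-(compL ℂ H F F σ₂ ∘L (compL ℂ H H F).flip Aζ) +
      compL ℂ H F F (gammaStar σ₁ σ₂ γ B C Xinv x))
  have hL : Continuous L :=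
    continuous_const.clm_comp (continuous_const.add ((compL ℂ H F F).continuous.comp hγ))
  intro x
  rw [← sub_eq_zero]
  exact eq_zero_of_hasDerivAt_clm_apply hL (f := fun x => Cst x ∘L X x - C x)
    (fun t => hasDerivAt_comp_sub_of_intertwining hσ₁inv (hC t) (hX t) (hLyap t) (hCst t) (hCstB t))
    (sub_eq_zero.2 hCst0) x

/-- **Intertwining yields the inverse:** if `C*` satisfies
`(C*)' = σ₁⁻¹ (σ₂ C* A + γ* C*)`, `C* B = C X⁻¹ B` for all `x`, and
`C*(0) X(0) = C(0)`, then `C*(x) X(x) = C(x)` for all `x`. -/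
theorem intertwining_yields_inverse
    {H : Type*} [NormedAddCommGroup H] [InnerProductSpace ℂ H] [CompleteSpace H]
    (σ₁ σ₁inv σ₂ γ : (Fin 2 → ℂ) →L[ℂ] (Fin 2 → ℂ))
    (hσ₁ : σ₁ ∘L σ₁inv = 1) (hσ₁inv : σ₁inv ∘L σ₁ = 1)
    (A Aζ : H →L[ℂ] H)
    (B : ℝ → ((Fin 2 → ℂ) →L[ℂ] H))
    (C : ℝ → (H →L[ℂ] (Fin 2 → ℂ)))
    (X Xinv : ℝ → (H →L[ℂ] H))
    (hXinv : ∀ x : ℝ, X x ∘L Xinv x = 1) (hXinv' : ∀ x : ℝ, Xinv x ∘L X x = 1)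
    (hB : ∀ x : ℝ, HasDerivAt B ((-((A ∘L B x) ∘L σ₂ + B x ∘L γ)) ∘L σ₁inv) x)
    (hC : ∀ x : ℝ, HasDerivAt C (σ₁inv ∘L (-(σ₂ ∘L (C x ∘L Aζ)) + γ ∘L C x)) x)
    (hX : ∀ x : ℝ, HasDerivAt X ((B x ∘L σ₂) ∘L C x) x)
    (hLyap : ∀ x : ℝ, A ∘L X x + X x ∘L Aζ + (B x ∘L σ₁) ∘L C x = 0)
    (Cst : ℝ → (H →L[ℂ] (Fin 2 → ℂ)))
    (hCst : ∀ x : ℝ, HasDerivAt Cst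
      (σ₁inv ∘L (σ₂ ∘L (Cst x ∘L A) + gammaStar σ₁ σ₂ γ B C Xinv x ∘L Cst x)) x)
    (hCstB : ∀ x : ℝ, Cst x ∘L B x = (C x ∘L Xinv x) ∘L B x)
    (hCst0 : Cst 0 ∘L X 0 = C 0) :
    ∀ x : ℝ, Cst x ∘L X x = C x :=
  intertwining_yields_inverse_general σ₁ σ₁inv σ₂ γ hσ₁inv A Aζ B C X Xinv hB hC hX hLyap Cst hCst
    hCstB hCst0
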